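/- Let Ω ⊆ ℂ be open and connected and let φ : Ω → ℝ be three times continuously real-differentiable. Define Q : Ω → ℂ by Q := φ_zz − (φ_z)² and K : Ω → ℝ by K := −4e^{−2φ}·φ_zz̄ (the Gaussian curvature of the conformal metric e^{2φ}g_euc; note φ_zz̄ is real-valued). Then Q is holomorphic on Ω (i.e., complex-differentiable, equivalently Q_z̄ ≡ 0) if and only if K is constant on Ω. -/

import Mathlib

open Complex

/-- Wirtinger derivative ∂/∂z: f_z = (1/2)(∂f/∂x − i ∂f/∂y). -/
noncomputable def wz (f : ℂ → ℂ) (z : ℂ) : ℂ :=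
  (1/2) * (fderiv ℝ f z 1 - Complex.I * fderiv ℝ f z Complex.I)

/-- Wirtinger derivative ∂/∂z̄: f_z̄ = (1/2)(∂f/∂x + i ∂f/∂y). -/
noncomputable def wzbar (f : ℂ → ℂ) (z : ℂ) : ℂ :=
  (1/2) * (fderiv ℝ f z 1 + Complex.I * fderiv ℝ f z Complex.I)

open Topology Filter ComplexConjugate

/-! The identity `wz_curvature_eq`, obtained from the product rule and the commutation of `∂` and
`∂̄` on `C²` functions, says `K_z = -4 e^{-2φ} Q_z̄`. Since `φ_zz̄` is real (conjugation swaps `∂`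
and `∂̄`), `K` is real-valued, so `K_z = 0` forces `dK = 0`. Hence `Q_z̄ ≡ 0`, which is
holomorphy of `Q` by Cauchy–Riemann, holds iff `dK ≡ 0` on `Ω`, iff `K` is constant on the
connected open set `Ω`. -/

section Wirtinger

variable {f g : ℂ → ℂ} {z : ℂ}

theorem Filter.EventuallyEq.wz_eq (h : f =ᶠ[𝓝 z] g) : wz f z = wz g z := by
  simp only [wz, h.fderiv_eq]

@[simp]
theorem wz_const (c : ℂ) : wz (fun _ => c) z = 0 := by
  simp [wz]

theorem wz_const_mul (c : ℂ) (hf : DifferentiableAt ℝ f z) :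
    wz (fun w => c * f w) z = c * wz f z := by
  simp only [wz, fderiv_const_mul hf, smul_apply, smul_eq_mul]
  ring

theorem wz_mul (hf : DifferentiableAt ℝ f z) (hg : DifferentiableAt ℝ g z) :
    wz (fun w => f w * g w) z = wz f z * g z + f z * wz g z := by
  simp only [wz, fderiv_fun_mul hf hg, add_apply, smul_apply, smul_eq_mul]
  ring

theorem wz_cexp (hf : DifferentiableAt ℝ f z) :
    wz (fun w => cexp (f w)) z = cexp (f z) * wz f z := by
  simp only [wz, hf.hasFDerivAt.cexp.fderiv, smul_apply, smul_eq_mul]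
  ring

theorem wzbar_sub (hf : DifferentiableAt ℝ f z) (hg : DifferentiableAt ℝ g z) :
    wzbar (fun w => f w - g w) z = wzbar f z - wzbar g z := by
  simp only [wzbar, fderiv_fun_sub hf hg, sub_apply]
  ring

theorem wzbar_sq (hf : DifferentiableAt ℝ f z) :
    wzbar (fun w => f w ^ 2) z = 2 * f z * wzbar f z := by
  simp only [wzbar, sq, fderiv_fun_mul hf hf, add_apply, smul_apply, smul_eq_mul]
  ring

theorem conj_wz : conj (wz f z) = wzbar (fun w => conj (f w)) z := by
  have : fderiv ℝ (fun w => conj (f w)) z = (conjCLE : ℂ →L[ℝ] ℂ).comp (fderiv ℝ f z) :=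
    conjCLE.comp_fderiv
  simp [wz, wzbar, this, map_ofNat]

theorem conj_wzbar : conj (wzbar f z) = wz (fun w => conj (f w)) z := by
  have : fderiv ℝ (fun w => conj (f w)) z = (conjCLE : ℂ →L[ℝ] ℂ).comp (fderiv ℝ f z) :=
    conjCLE.comp_fderiv
  simp [wz, wzbar, this, map_ofNat, sub_eq_add_neg]

theorem ContDiffAt.wz {m n : WithTop ℕ∞} (hf : ContDiffAt ℝ n f z) (hmn : m + 1 ≤ n) :
    ContDiffAt ℝ m (wz f) z := by
  have hD := hf.fderiv_right hmn
  unfold _root_.wz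
  fun_prop

theorem ContDiffAt.wzbar {m n : WithTop ℕ∞} (hf : ContDiffAt ℝ n f z) (hmn : m + 1 ≤ n) :
    ContDiffAt ℝ m (wzbar f) z := by
  have hD := hf.fderiv_right hmn
  unfold _root_.wzbar
  fun_prop

theorem fderiv_wz_apply (hf : DifferentiableAt ℝ (fderiv ℝ f) z) (v : ℂ) :
    fderiv ℝ (wz f) z v =
      (1/2) * (fderiv ℝ (fderiv ℝ f) z v 1 - I * fderiv ℝ (fderiv ℝ f) z v I) := by
  unfold wz
  rw [fderiv_const_mul (by fun_prop), fderiv_fun_sub (by fun_prop) (by fun_prop),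
    fderiv_const_mul (by fun_prop), fderiv_clm_apply hf (differentiableAt_const _),
    fderiv_clm_apply hf (differentiableAt_const _)]
  simp

theorem fderiv_wzbar_apply (hf : DifferentiableAt ℝ (fderiv ℝ f) z) (v : ℂ) :
    fderiv ℝ (wzbar f) z v =
      (1/2) * (fderiv ℝ (fderiv ℝ f) z v 1 + I * fderiv ℝ (fderiv ℝ f) z v I) := by
  unfold wzbar
  rw [fderiv_const_mul (by fun_prop), fderiv_fun_add (by fun_prop) (by fun_prop),
    fderiv_const_mul (by fun_prop), fderiv_clm_apply hf (differentiableAt_const _),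
    fderiv_clm_apply hf (differentiableAt_const _)]
  simp [mul_add]

theorem wz_wzbar_comm (hf : ContDiffAt ℝ 2 f z) : wz (wzbar f) z = wzbar (wz f) z := by
  have hD : DifferentiableAt ℝ (fderiv ℝ f) z :=
    (hf.fderiv_right (m := 1) le_rfl).differentiableAt one_ne_zero
  have hsymm := hf.isSymmSndFDerivAt (by simp [minSmoothness_of_isRCLikeNormedField]) I 1
  simp only [wz, wzbar, fderiv_wz_apply hD, fderiv_wzbar_apply hD, hsymm]
  ring

theorem differentiableAt_complex_iff_wzbar_eq_zero (hf : DifferentiableAt ℝ f z) :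
    DifferentiableAt ℂ f z ↔ wzbar f z = 0 := by
  rw [differentiableAt_complex_iff_differentiableAt_real, wzbar, smul_eq_mul]
  constructor
  · rintro ⟨-, h⟩
    rw [h]
    linear_combination (fderiv ℝ f z 1 / 2) * I_mul_I
  · intro h
    refine ⟨hf, ?_⟩
    linear_combination (-2 * I) * h + fderiv ℝ f z I * I_mul_I

theorem fderiv_eq_zero_of_wz_ofReal_eq_zero {ψ : ℂ → ℝ} (hψ : DifferentiableAt ℝ ψ z)
    (h : wz (fun w => (ψ w : ℂ)) z = 0) : fderiv ℝ ψ z = 0 := by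
  have hD : fderiv ℝ (fun w => (ψ w : ℂ)) z = ofRealCLM.comp (fderiv ℝ ψ z) :=
    (ofRealCLM.hasFDerivAt.comp z hψ.hasFDerivAt).fderiv
  simp only [wz, hD, ContinuousLinearMap.comp_apply, ofRealCLM_apply] at h
  have h1 : fderiv ℝ ψ z 1 = 0 := by simpa using congrArg re h
  have hI : fderiv ℝ ψ z I = 0 := by simpa using congrArg im h
  refine ContinuousLinearMap.coe_injective (basisOneI.ext fun i => ?_)
  fin_cases i <;> simp [h1, hI]

theorem conj_wzbar_wz_ofReal {ψ : ℂ → ℝ} (hψ : ContDiffAt ℝ 2 ψ z) :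
    conj (wzbar (wz (fun w => (ψ w : ℂ))) z) = wzbar (wz (fun w => (ψ w : ℂ))) z := by
  have hconj : (fun w => conj (wz (fun w => (ψ w : ℂ)) w)) = wzbar (fun w => (ψ w : ℂ)) :=
    funext fun w => by simp only [conj_wz, conj_ofReal]
  have hf : ContDiffAt ℝ 2 (fun w => (ψ w : ℂ)) z := ofRealCLM.contDiff.contDiffAt.comp z hψ
  rw [conj_wzbar, hconj, wz_wzbar_comm hf]

theorem wz_curvature_eq (hf : ContDiffAt ℝ 3 f z) :
    wz (fun w => -4 * cexp (-2 * f w) * wzbar (wz f) w) z =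
      -4 * cexp (-2 * f z) * wzbar (fun w => wz (wz f) w - wz f w ^ 2) z := by
  have hf₂ : ContDiffAt ℝ 2 (wz f) z := hf.wz (by norm_num)
  have hdf : DifferentiableAt ℝ f z := hf.differentiableAt (by norm_num)
  have hdwz : DifferentiableAt ℝ (wz f) z := hf₂.differentiableAt two_ne_zero
  have hdwzwz : DifferentiableAt ℝ (wz (wz f)) z := (hf₂.wz le_rfl).differentiableAt one_ne_zero
  have hdwzbarwz : DifferentiableAt ℝ (wzbar (wz f)) z :=
    (hf₂.wzbar le_rfl).differentiableAt one_ne_zero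
  rw [wz_mul (by fun_prop) hdwzbarwz, wz_const_mul _ (by fun_prop), wz_cexp (by fun_prop),
    wz_const_mul _ hdf, wz_wzbar_comm hf₂, wzbar_sub hdwzwz (by fun_prop), wzbar_sq hdwz]
  ring

end Wirtinger

noncomputable def schwarzian (φ : ℂ → ℝ) (z : ℂ) : ℂ :=
  wz (wz (fun w => (φ w : ℂ))) z - wz (fun w => (φ w : ℂ)) z ^ 2

noncomputable def gaussCurvature (φ : ℂ → ℝ) (z : ℂ) : ℝ :=
  -4 * Real.exp (-2 * φ z) * (wzbar (wz (fun w => (φ w : ℂ))) z).re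

section Curvature

variable {φ : ℂ → ℝ} {z : ℂ}

theorem ofReal_gaussCurvature (hφ : ContDiffAt ℝ 2 φ z) :
    (gaussCurvature φ z : ℂ) = -4 * cexp (-2 * φ z) * wzbar (wz (fun w => (φ w : ℂ))) z := by
  rw [← conj_eq_iff_re.1 (conj_wzbar_wz_ofReal hφ)]
  simp only [gaussCurvature, ofReal_mul, ofReal_exp, ofReal_neg, ofReal_ofNat]

theorem ContDiffAt.differentiableAt_gaussCurvature (hφ : ContDiffAt ℝ 3 φ z) :
    DifferentiableAt ℝ (gaussCurvature φ) z := by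
  have hf : ContDiffAt ℝ 3 (fun w => (φ w : ℂ)) z := ofRealCLM.contDiff.contDiffAt.comp z hφ
  have hC := ((hf.wz (m := 2) (by norm_num)).wzbar le_rfl).differentiableAt one_ne_zero
  exact (((hφ.differentiableAt (by norm_num)).const_mul (-2)).exp.const_mul (-4)).mul
    (reCLM.differentiableAt.comp z hC)

theorem differentiableAt_schwarzian_iff_wz_gaussCurvature_eq_zero (hφ : ContDiffAt ℝ 3 φ z) :
    DifferentiableAt ℂ (schwarzian φ) z ↔ wz (fun w => (gaussCurvature φ w : ℂ)) z = 0 := by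
  have hf : ContDiffAt ℝ 3 (fun w => (φ w : ℂ)) z := ofRealCLM.contDiff.contDiffAt.comp z hφ
  have hwz : ContDiffAt ℝ 2 (wz (fun w => (φ w : ℂ))) z := hf.wz (by norm_num)
  have hQ : DifferentiableAt ℝ (schwarzian φ) z :=
    ((hwz.wz le_rfl).differentiableAt one_ne_zero).sub ((hwz.differentiableAt two_ne_zero).pow 2)
  have hK : (fun w => (gaussCurvature φ w : ℂ)) =ᶠ[𝓝 z]
      fun w => -4 * cexp (-2 * φ w) * wzbar (wz (fun w => (φ w : ℂ))) w :=
    (hφ.eventually (by simp)).mono fun w hw => ofReal_gaussCurvature (hw.of_le (by norm_num))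
  rw [hK.wz_eq, wz_curvature_eq hf, differentiableAt_complex_iff_wzbar_eq_zero hQ, mul_eq_zero,
    or_iff_right (by simp)]
  rfl

end Curvature

theorem stmt8 (Ω : Set ℂ) (hΩ : IsOpen Ω) (hconn : IsConnected Ω)
    (φ : ℂ → ℝ) (hφ : ContDiffOn ℝ 3 φ Ω) :
    DifferentiableOn ℂ
        (fun z => wz (wz (fun w => (φ w : ℂ))) z - (wz (fun w => (φ w : ℂ)) z) ^ 2) Ω ↔
      ∃ c : ℝ, ∀ z ∈ Ω,
        -4 * Real.exp (-2 * φ z) * (wzbar (wz (fun w => (φ w : ℂ))) z).re = c := by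
  change DifferentiableOn ℂ (schwarzian φ) Ω ↔ ∃ c : ℝ, ∀ z ∈ Ω, gaussCurvature φ z = c
  have hφ' : ∀ z ∈ Ω, ContDiffAt ℝ 3 φ z := fun z hz => hφ.contDiffAt (hΩ.mem_nhds hz)
  constructor
  · intro hQ
    have hK : DifferentiableOn ℝ (gaussCurvature φ) Ω := fun z hz =>
      (hφ' z hz).differentiableAt_gaussCurvature.differentiableWithinAt
    obtain ⟨z₀, hz₀⟩ := hconn.nonempty
    refine ⟨gaussCurvature φ z₀, fun z hz =>
      hΩ.is_const_of_fderiv_eq_zero hconn.isPreconnected hK (fun w hw => ?_) hz hz₀⟩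
    exact fderiv_eq_zero_of_wz_ofReal_eq_zero (hK.differentiableAt (hΩ.mem_nhds hw))
      ((differentiableAt_schwarzian_iff_wz_gaussCurvature_eq_zero (hφ' w hw)).1
        (hQ.differentiableAt (hΩ.mem_nhds hw)))
  · rintro ⟨c, hc⟩ z hz
    refine ((differentiableAt_schwarzian_iff_wz_gaussCurvature_eq_zero (hφ' z hz)).2 ?_)
      |>.differentiableWithinAt
    have hKc : (fun w => (gaussCurvature φ w : ℂ)) =ᶠ[𝓝 z] fun _ => (c : ℂ) :=
      eventuallyEq_of_mem (hΩ.mem_nhds hz) fun w hw => congrArg _ (hc w hw)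
    rw [hKc.wz_eq, wz_const]
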